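/- Let ℓ : ℝ^d → ℝ be continuously differentiable with |ℓ(ξ)| + ‖∇ℓ(ξ)‖ ≤ C exp(a‖ξ‖) for some constants C, a > 0, let ω > 0, and let q_Λ(ξ) = Σ_{k=1}^K π_k N(ξ; μ_k, S_k^{−1}) be a Gaussian mixture density with weights π_k > 0 summing to 1 and S_k symmetric positive definite. Define f_ω(ξ; Λ) = ℓ(ξ) + ω log q_Λ(ξ) and L_ω(Λ) = ∫ q_Λ(ξ) f_ω(ξ; Λ) dξ. Fix a parameter value Λ and k ∈ {1, …, K}, and assume that differentiation under the integral sign with respect to μ_k is valid for L_ω at Λ. Then the gradient of L_ω with respect to μ_k at Λ satisfies ∇_{μ_k} L_ω(Λ) = π_k ∫ N(ξ; μ_k, S_k^{−1}) S_k(ξ − μ_k) f_ω(ξ; Λ) dξ = π_k ∫ N(ξ; μ_k, S_k^{−1}) ∇_ξ f_ω(ξ; Λ) dξ, where in both right-hand sides the integrand f_ω(·; Λ) is evaluated at the fixed current parameter value Λ. -/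

import Mathlib

open MeasureTheory Real Matrix

/-- The Gaussian density on `ℝ^d` with mean `μ` and covariance matrix `Cov`. -/
noncomputable def gaussDensity (d : ℕ) (μ : Fin d → ℝ) (Cov : Matrix (Fin d) (Fin d) ℝ)
    (ξ : Fin d → ℝ) : ℝ :=
  (2 * Real.pi) ^ (-(d : ℝ) / 2) * Cov.det ^ (-(1/2) : ℝ) *
    Real.exp (-(1/2) * ((ξ - μ) ⬝ᵥ (Cov⁻¹ *ᵥ (ξ - μ))))

/-!
Only the `k`-th summand of the mixture depends on `μ_k`, and
`∇_m N(ξ; m, S⁻¹) = N(ξ; m, S⁻¹) S(ξ - m)`. Since `d/dq [q (ℓ + ω log q)] = ℓ + ω log q + ω`,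
the gradient is
`π_k ∫ N(ξ; μ_k, S_k⁻¹) S_k(ξ - μ_k) (f_ω(ξ) + ω) dξ`. Both claimed forms then follow from Stein's
identity `∫ N S(ξ - μ) h = ∫ N ∇h`, which is integration by parts against `∇_ξ N = -N S(ξ - μ)`:
applied to `h = f_ω + ω` it yields the second form (as `∇(f_ω + ω) = ∇f_ω`), and applied to
`h = f_ω` it identifies the second form with the first.
All integrals converge because `ℓ`, `log q_Λ` and their derivatives grow at most exponentially in
`‖ξ‖` (`log q_Λ` even quadratically), while the Gaussian decays like `exp (-c ‖ξ‖²)`.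
-/

open Asymptotics

lemma isBigO_exp_mul_norm_of_le {E : Type*} [SeminormedAddCommGroup E] {b b' : ℝ} (h : b ≤ b') :
    (fun x : E => exp (b * ‖x‖)) =O[⊤] fun x => exp (b' * ‖x‖) :=
  isBigO_of_le _ fun x => by
    simp only [Real.norm_eq_abs, abs_exp]
    exact exp_le_exp.2 (mul_le_mul_of_nonneg_right h (norm_nonneg x))

def HasExpGrowth {E F : Type*} [Norm E] [Norm F] (f : E → F) : Prop :=
  ∃ b : ℝ, f =O[⊤] fun x => exp (b * ‖x‖)

namespace HasExpGrowth

variable {E F G : Type*} [NormedAddCommGroup E] [NormedAddCommGroup F] [NormedAddCommGroup G]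

lemma of_le {f : E → F} (C b : ℝ) (h : ∀ x, ‖f x‖ ≤ C * exp (b * ‖x‖)) : HasExpGrowth f :=
  ⟨b, .of_bound C (.of_forall fun x => by simpa using h x)⟩

lemma congr {f g : E → F} (hf : HasExpGrowth f) (h : ∀ x, f x = g x) : HasExpGrowth g :=
  funext h ▸ hf

lemma of_isBigO {f : E → F} {g : E → G} (hg : HasExpGrowth g) (h : f =O[⊤] g) :
    HasExpGrowth f :=
  let ⟨b, hb⟩ := hg; ⟨b, h.trans hb⟩

lemma norm {f : E → F} (hf : HasExpGrowth f) : HasExpGrowth fun x => ‖f x‖ :=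
  let ⟨b, hb⟩ := hf; ⟨b, hb.norm_left⟩

lemma const (c : F) : HasExpGrowth fun _ : E => c :=
  of_le ‖c‖ 0 fun x => by simp

lemma add {f g : E → F} (hf : HasExpGrowth f) (hg : HasExpGrowth g) :
    HasExpGrowth fun x => f x + g x := by
  obtain ⟨b, hb⟩ := hf
  obtain ⟨b', hb'⟩ := hg
  exact ⟨max b b', (hb.trans (isBigO_exp_mul_norm_of_le (le_max_left b b'))).add
    (hb'.trans (isBigO_exp_mul_norm_of_le (le_max_right b b')))⟩

lemma sum {ι : Type*} (s : Finset ι) {f : ι → E → F} (hf : ∀ i ∈ s, HasExpGrowth (f i)) :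
    HasExpGrowth fun x => ∑ i ∈ s, f i x := by
  classical
  induction s using Finset.induction_on with
  | empty => simpa using const (0 : F)
  | insert i s hi ih =>
    simp only [Finset.sum_insert hi]
    exact (hf i (s.mem_insert_self i)).add (ih fun j hj => hf j (Finset.mem_insert_of_mem hj))

lemma smul [NormedSpace ℝ F] {c : E → ℝ} {f : E → F} (hc : HasExpGrowth c)
    (hf : HasExpGrowth f) : HasExpGrowth fun x => c x • f x := by
  obtain ⟨b, hb⟩ := hc
  obtain ⟨b', hb'⟩ := hf
  refine ⟨b + b', (hb.smul hb').trans (isBigO_of_le _ fun x => ?_)⟩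
  simp [add_mul, exp_add]

lemma mul {f g : E → ℝ} (hf : HasExpGrowth f) (hg : HasExpGrowth g) :
    HasExpGrowth fun x => f x * g x :=
  hf.smul hg

lemma clm_apply [NormedSpace ℝ F] [NormedSpace ℝ G] {L : E → F →L[ℝ] G} {f : E → F}
    (hL : HasExpGrowth L) (hf : HasExpGrowth f) : HasExpGrowth fun x => L x (f x) := by
  obtain ⟨b, hb⟩ := hL
  obtain ⟨b', hb'⟩ := hf
  refine ⟨b + b', (isBoundedBilinearMap_apply.isBigO_comp (g := L) (h := f)).trans
    ((hb.norm_left.mul hb'.norm_left).trans (isBigO_of_le _ fun x => ?_))⟩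
  simp [add_mul, exp_add]

lemma log {p q : E → ℝ} (hq : HasExpGrowth q) (hp : HasExpGrowth fun x => Real.log (p x))
    (hp0 : ∀ x, 0 < p x) (hpq : ∀ x, p x ≤ q x) : HasExpGrowth fun x => Real.log (q x) := by
  refine (hq.norm.add hp.norm).of_isBigO (isBigO_of_le _ fun x => ?_)
  simp only [Real.norm_eq_abs]
  rw [abs_of_nonneg (a := |q x| + |Real.log (p x)|) (by positivity), abs_le]
  constructor
  · linarith [log_le_log (hp0 x) (hpq x), neg_abs_le (Real.log (p x)), abs_nonneg (q x)]
  · linarith [log_le_sub_one_of_pos ((hp0 x).trans_le (hpq x)), le_abs_self (q x),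
      abs_nonneg (Real.log (p x))]

lemma clm_sub [NormedSpace ℝ E] [NormedSpace ℝ F] (L : E →L[ℝ] F) (m : E) :
    HasExpGrowth fun x => L (x - m) := by
  refine of_le (‖L‖ * (1 + ‖m‖)) 1 fun x => ?_
  have h₁ : ‖x - m‖ ≤ (1 + ‖m‖) * exp ‖x‖ := by
    nlinarith [norm_sub_le x m, add_one_le_exp ‖x‖, norm_nonneg x, norm_nonneg m]
  calc ‖L (x - m)‖ ≤ ‖L‖ * ‖x - m‖ := L.le_opNorm _
    _ ≤ ‖L‖ * ((1 + ‖m‖) * exp ‖x‖) := by gcongr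
    _ = _ := by rw [one_mul, mul_assoc]

end HasExpGrowth

structure DifferentiableWithExpGrowth {E : Type*} [NormedAddCommGroup E] [NormedSpace ℝ E]
    (f : E → ℝ) : Prop where
  differentiable : Differentiable ℝ f
  hasExpGrowth : HasExpGrowth f
  hasExpGrowth_fderiv : HasExpGrowth (fderiv ℝ f)

namespace DifferentiableWithExpGrowth

variable {E : Type*} [NormedAddCommGroup E] [NormedSpace ℝ E] {f g : E → ℝ}

lemma of_abs_add_norm_fderiv_le (hd : Differentiable ℝ f) {C a : ℝ}
    (h : ∀ x, |f x| + ‖fderiv ℝ f x‖ ≤ C * exp (a * ‖x‖)) : DifferentiableWithExpGrowth f where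
  differentiable := hd
  hasExpGrowth := .of_le C a fun x => by
    linarith [h x, norm_nonneg (fderiv ℝ f x), Real.norm_eq_abs (f x)]
  hasExpGrowth_fderiv := .of_le C a fun x => by linarith [h x, abs_nonneg (f x)]

lemma add (hf : DifferentiableWithExpGrowth f) (hg : DifferentiableWithExpGrowth g) :
    DifferentiableWithExpGrowth fun x => f x + g x where
  differentiable := hf.differentiable.add hg.differentiable
  hasExpGrowth := hf.hasExpGrowth.add hg.hasExpGrowth
  hasExpGrowth_fderiv := (hf.hasExpGrowth_fderiv.add hg.hasExpGrowth_fderiv).congr fun x =>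
    (fderiv_fun_add (hf.differentiable x) (hg.differentiable x)).symm

lemma const_mul (hf : DifferentiableWithExpGrowth f) (c : ℝ) :
    DifferentiableWithExpGrowth fun x => c * f x where
  differentiable := hf.differentiable.const_mul c
  hasExpGrowth := (HasExpGrowth.const c).mul hf.hasExpGrowth
  hasExpGrowth_fderiv := ((HasExpGrowth.const c).smul hf.hasExpGrowth_fderiv).congr fun x =>
    (fderiv_const_mul (hf.differentiable x) c).symm

lemma add_const (hf : DifferentiableWithExpGrowth f) (c : ℝ) :
    DifferentiableWithExpGrowth fun x => f x + c where
  differentiable := hf.differentiable.add_const c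
  hasExpGrowth := hf.hasExpGrowth.add (.const c)
  hasExpGrowth_fderiv := hf.hasExpGrowth_fderiv.congr fun _ => (fderiv_add_const c).symm

end DifferentiableWithExpGrowth

lemma integrable_exp_neg_mul_sq_norm_pi {ι : Type*} [Fintype ι] {c : ℝ} (hc : 0 < c) :
    Integrable fun y : ι → ℝ => exp (-c * ‖y‖ ^ 2) := by
  set n : ℝ := (Fintype.card ι : ℝ)
  -- `n + 1` rather than `n`, so that an empty index type needs no separate treatment
  have hprod : Integrable fun y : ι → ℝ => ∏ i, exp (-(c / (n + 1)) * y i ^ 2) :=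
    Integrable.fintype_prod fun _ => integrable_exp_neg_mul_sq (by positivity)
  refine hprod.mono' (by fun_prop) (.of_forall fun y => ?_)
  rw [Real.norm_of_nonneg (exp_pos _).le, ← exp_sum, exp_le_exp]
  have hsum : ∑ i, y i ^ 2 ≤ n * ‖y‖ ^ 2 := by
    simpa using Finset.sum_le_sum fun i (_ : i ∈ Finset.univ) =>
      (sq_abs (y i)).symm.trans_le (pow_le_pow_left₀ (abs_nonneg _) (norm_le_pi_norm y i) 2)
  have hn : n / (n + 1) ≤ 1 := div_le_one_of_le₀ (by linarith) (by positivity)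
  calc -c * ‖y‖ ^ 2 ≤ -(c / (n + 1)) * (n * ‖y‖ ^ 2) := by
        rw [neg_mul, neg_mul, neg_le_neg_iff, ← mul_assoc, div_mul_eq_mul_div, mul_div_assoc]
        exact mul_le_mul_of_nonneg_right (mul_le_of_le_one_right hc.le hn) (by positivity)
    _ ≤ ∑ i, -(c / (n + 1)) * y i ^ 2 := by
        rw [← Finset.mul_sum, neg_mul, neg_mul, neg_le_neg_iff]
        exact mul_le_mul_of_nonneg_left hsum (by positivity)

lemma integrable_exp_neg_mul_sq_norm_sub_mul_exp {ι : Type*} [Fintype ι] {c : ℝ} (hc : 0 < c)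
    (m : ι → ℝ) (b : ℝ) :
    Integrable fun ξ : ι → ℝ => exp (-c * ‖ξ - m‖ ^ 2) * exp (b * ‖ξ‖) := by
  refine (((integrable_exp_neg_mul_sq_norm_pi (half_pos hc)).comp_sub_right m).const_mul
    (exp (|b| * ‖m‖ + b ^ 2 / (2 * c)))).mono' (by fun_prop) (.of_forall fun ξ => ?_)
  rw [Real.norm_of_nonneg (by positivity), ← exp_add, ← exp_add, exp_le_exp]
  set t := ‖ξ - m‖
  have h₁ : b * ‖ξ‖ ≤ |b| * (t + ‖m‖) :=
    (le_abs_self _).trans_eq (by rw [abs_mul, abs_norm]) |>.trans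
      (mul_le_mul_of_nonneg_left (norm_le_norm_sub_add ξ m) (abs_nonneg b))
  -- AM-GM
  have h₂ : |b| * t ≤ c / 2 * t ^ 2 + b ^ 2 / (2 * c) := by
    have h : c / 2 * t ^ 2 + b ^ 2 / (2 * c) - |b| * t = (c * t - |b|) ^ 2 / (2 * c) := by
      rw [← sq_abs b]; field_simp; ring
    linarith [show 0 ≤ (c * t - |b|) ^ 2 / (2 * c) by positivity]
  nlinarith

namespace Matrix

variable {n : Type*} [Fintype n]

noncomputable def dotProductCLM : (n → ℝ) →L[ℝ] (n → ℝ) →L[ℝ] ℝ :=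
  ∑ i, (ContinuousLinearMap.proj i).smulRight (ContinuousLinearMap.proj i)

@[simp]
lemma dotProductCLM_apply (c v : n → ℝ) : dotProductCLM c v = c ⬝ᵥ v := by
  simp [dotProductCLM, dotProduct]

lemma IsSymm.dotProduct_mulVec_comm {A : Matrix n n ℝ} (hA : A.IsSymm) (x y : n → ℝ) :
    x ⬝ᵥ (A *ᵥ y) = (A *ᵥ x) ⬝ᵥ y := by
  rw [dotProduct_mulVec, ← vecMul_transpose, hA]

lemma IsSymm.hasFDerivAt_dotProduct_mulVec_self {A : Matrix n n ℝ} (hA : A.IsSymm)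
    (x : n → ℝ) :
    HasFDerivAt (fun y => y ⬝ᵥ (A *ᵥ y)) ((2 : ℝ) • dotProductCLM (A *ᵥ x)) x := by
  have h := (dotProductCLM (n := n)).hasFDerivAt_of_bilinear (hasFDerivAt_id x)
    (LinearMap.toContinuousLinearMap A.mulVecLin).hasFDerivAt
  refine (h.congr_fderiv ?_).congr_of_eventuallyEq (.of_forall fun y => by simp)
  ext v
  simp [two_mul, hA.dotProduct_mulVec_comm x v, dotProduct_comm v (A *ᵥ x)]

lemma PosDef.exists_pos_mul_sq_norm_le {A : Matrix n n ℝ} (hA : A.PosDef) :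
    ∃ c > 0, ∀ x : n → ℝ, c * ‖x‖ ^ 2 ≤ x ⬝ᵥ (A *ᵥ x) := by
  rcases subsingleton_or_nontrivial (n → ℝ) with _ | _
  · exact ⟨1, one_pos, fun x => by simp [Subsingleton.elim x 0]⟩
  obtain ⟨x₀, hx₀, hmin⟩ := (isCompact_sphere (0 : n → ℝ) 1).exists_isMinOn
    (NormedSpace.sphere_nonempty.2 zero_le_one)
    (by fun_prop : Continuous fun x : n → ℝ => x ⬝ᵥ (A *ᵥ x)).continuousOn
  have hx₀0 : x₀ ≠ 0 := ne_zero_of_mem_unit_sphere ⟨x₀, hx₀⟩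
  refine ⟨x₀ ⬝ᵥ (A *ᵥ x₀), by simpa using hA.dotProduct_mulVec_pos hx₀0, fun x => ?_⟩
  rcases eq_or_ne x 0 with rfl | hx
  · simp
  have hx' : 0 < ‖x‖ := norm_pos_iff.2 hx
  have h : x₀ ⬝ᵥ (A *ᵥ x₀) ≤ (‖x‖⁻¹ • x) ⬝ᵥ (A *ᵥ (‖x‖⁻¹ • x)) :=
    hmin (by simp [norm_smul, hx'.ne'])
  simp only [mulVec_smul, dotProduct_smul, smul_dotProduct, smul_eq_mul] at h
  calc x₀ ⬝ᵥ (A *ᵥ x₀) * ‖x‖ ^ 2 ≤ ‖x‖⁻¹ * (‖x‖⁻¹ * x ⬝ᵥ (A *ᵥ x)) * ‖x‖ ^ 2 := by gcongr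
    _ = x ⬝ᵥ (A *ᵥ x) := by field_simp

lemma hasExpGrowth_dotProductCLM_mulVec_sub (A : Matrix n n ℝ) (m : n → ℝ) :
    HasExpGrowth fun ξ => dotProductCLM (A *ᵥ (ξ - m)) :=
  (HasExpGrowth.clm_sub (dotProductCLM.comp (LinearMap.toContinuousLinearMap A.mulVecLin)) m).congr
    fun ξ => by simp

end Matrix

section Gaussian

variable {d : ℕ} {A : Matrix (Fin d) (Fin d) ℝ}

lemma continuous_gaussDensity (m : Fin d → ℝ) (Cov : Matrix (Fin d) (Fin d) ℝ) :
    Continuous (gaussDensity d m Cov) := by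
  unfold gaussDensity
  fun_prop

lemma gaussDensity_pos {Cov : Matrix (Fin d) (Fin d) ℝ} (hCov : Cov.PosDef) (m ξ : Fin d → ℝ) :
    0 < gaussDensity d m Cov ξ := by
  have := hCov.det_pos
  unfold gaussDensity
  positivity

lemma gaussDensity_comm (m ξ : Fin d → ℝ) (Cov : Matrix (Fin d) (Fin d) ℝ) :
    gaussDensity d m Cov ξ = gaussDensity d ξ Cov m := by
  simp only [gaussDensity, ← neg_sub ξ m, mulVec_neg, dotProduct_neg, neg_dotProduct, neg_neg]

lemma gaussDensity_inv (hA : A.PosDef) (m ξ : Fin d → ℝ) :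
    gaussDensity d m A⁻¹ ξ = (2 * π) ^ (-(d : ℝ) / 2) * A⁻¹.det ^ (-(1/2) : ℝ) *
      exp (-(1/2) * ((ξ - m) ⬝ᵥ (A *ᵥ (ξ - m)))) := by
  rw [gaussDensity, nonsing_inv_nonsing_inv A (isUnit_iff_ne_zero.2 hA.det_pos.ne')]

lemma hasFDerivAt_gaussDensity (hA : A.PosDef) (m ξ : Fin d → ℝ) :
    HasFDerivAt (gaussDensity d m A⁻¹)
      (-gaussDensity d m A⁻¹ ξ • dotProductCLM (A *ᵥ (ξ - m))) ξ := by
  have hQ := ((isHermitian_iff_isSymm.1 hA.isHermitian).hasFDerivAt_dotProduct_mulVec_self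
    (ξ - m)).comp ξ ((hasFDerivAt_id ξ).sub_const m)
  have h := (hQ.const_mul (-(1/2) : ℝ)).exp.const_mul
    ((2 * π) ^ (-(d : ℝ) / 2) * A⁻¹.det ^ (-(1/2) : ℝ))
  refine (h.congr_fderiv ?_).congr_of_eventuallyEq (.of_forall (gaussDensity_inv hA m))
  ext v
  simp [gaussDensity_inv hA]
  ring

lemma hasFDerivAt_gaussDensity_mean (hA : A.PosDef) (m ξ : Fin d → ℝ) :
    HasFDerivAt (fun m => gaussDensity d m A⁻¹ ξ)
      (gaussDensity d m A⁻¹ ξ • dotProductCLM (A *ᵥ (ξ - m))) m := by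
  simp_rw [gaussDensity_comm _ ξ]
  convert hasFDerivAt_gaussDensity hA ξ m using 1
  rw [← neg_sub ξ m, mulVec_neg, map_neg, smul_neg, neg_smul, neg_neg]

lemma isBigO_gaussDensity (hA : A.PosDef) (m : Fin d → ℝ) :
    ∃ c > 0, gaussDensity d m A⁻¹ =O[⊤] fun ξ => exp (-c * ‖ξ - m‖ ^ 2) := by
  obtain ⟨c, hc, hQ⟩ := hA.exists_pos_mul_sq_norm_le
  refine ⟨c / 2, by positivity, .of_bound ((2 * π) ^ (-(d : ℝ) / 2) * A⁻¹.det ^ (-(1/2) : ℝ))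
    (.of_forall fun ξ => ?_)⟩
  rw [Real.norm_of_nonneg (gaussDensity_pos hA.inv m ξ).le, Real.norm_of_nonneg (exp_pos _).le,
    gaussDensity_inv hA]
  have := hA.inv.det_pos
  exact mul_le_mul_of_nonneg_left (exp_le_exp.2 (by linarith [hQ (ξ - m)])) (by positivity)

lemma hasExpGrowth_gaussDensity (hA : A.PosDef) (m : Fin d → ℝ) :
    HasExpGrowth (gaussDensity d m A⁻¹) := by
  obtain ⟨c, hc, h⟩ := isBigO_gaussDensity hA m
  refine (HasExpGrowth.const (1 : ℝ)).of_isBigO (h.trans (isBigO_of_le _ fun ξ => ?_))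
  rw [norm_one, Real.norm_of_nonneg (exp_pos _).le, exp_le_one_iff]
  nlinarith [sq_nonneg ‖ξ - m‖]

lemma hasExpGrowth_log_gaussDensity (hA : A.PosDef) (m : Fin d → ℝ) :
    HasExpGrowth fun ξ => log (gaussDensity d m A⁻¹ ξ) := by
  have hQ : HasExpGrowth fun ξ => (ξ - m) ⬝ᵥ (A *ᵥ (ξ - m)) :=
    ((HasExpGrowth.clm_sub dotProductCLM m).clm_apply
      (HasExpGrowth.clm_sub (LinearMap.toContinuousLinearMap A.mulVecLin) m)).congr
      fun ξ => by simp
  refine ((HasExpGrowth.const (log ((2 * π) ^ (-(d : ℝ) / 2) * A⁻¹.det ^ (-(1/2) : ℝ)))).add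
    ((HasExpGrowth.const (-(1/2) : ℝ)).mul hQ)).congr fun ξ => ?_
  have := hA.inv.det_pos
  rw [gaussDensity_inv hA, log_mul (by positivity) (exp_pos _).ne', log_exp]

lemma HasExpGrowth.integrable_gaussDensity_smul {E : Type*} [NormedAddCommGroup E]
    [NormedSpace ℝ E] (hA : A.PosDef) (m : Fin d → ℝ) {h : (Fin d → ℝ) → E}
    (hh : HasExpGrowth h) (hm : AEStronglyMeasurable h) :
    Integrable fun ξ => gaussDensity d m A⁻¹ ξ • h ξ := by
  obtain ⟨c, hc, hg⟩ := isBigO_gaussDensity hA m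
  obtain ⟨b, hb⟩ := hh
  exact (hg.smul hb).integrable ((continuous_gaussDensity m _).aestronglyMeasurable.smul hm)
    (by simpa using integrable_exp_neg_mul_sq_norm_sub_mul_exp hc m b)

/-- Stein's identity for the Gaussian with precision matrix `A`. -/
theorem integral_gaussDensity_mul_score_mul (hA : A.PosDef) (m v : Fin d → ℝ)
    {h : (Fin d → ℝ) → ℝ} (hh : DifferentiableWithExpGrowth h) :
    ∫ ξ, gaussDensity d m A⁻¹ ξ * ((A *ᵥ (ξ - m)) ⬝ᵥ v * h ξ) =
      ∫ ξ, gaussDensity d m A⁻¹ ξ * fderiv ℝ h ξ v := by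
  have hg' : ∀ ξ, fderiv ℝ (gaussDensity d m A⁻¹) ξ v =
      -(gaussDensity d m A⁻¹ ξ * (A *ᵥ (ξ - m)) ⬝ᵥ v) := fun ξ => by
    simp [(hasFDerivAt_gaussDensity hA m ξ).fderiv]
  have hscore : HasExpGrowth fun ξ => (A *ᵥ (ξ - m)) ⬝ᵥ v :=
    ((hasExpGrowth_dotProductCLM_mulVec_sub A m).clm_apply (.const v)).congr fun ξ => by simp
  have hint : Integrable fun ξ => gaussDensity d m A⁻¹ ξ * ((A *ᵥ (ξ - m)) ⬝ᵥ v * h ξ) := by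
    have hcont : Continuous fun ξ => (A *ᵥ (ξ - m)) ⬝ᵥ v * h ξ :=
      (by fun_prop : Continuous fun ξ => (A *ᵥ (ξ - m)) ⬝ᵥ v).mul hh.differentiable.continuous
    simpa using (hscore.mul hh.hasExpGrowth).integrable_gaussDensity_smul hA m
      hcont.aestronglyMeasurable
  have hg'h : Integrable fun ξ => fderiv ℝ (gaussDensity d m A⁻¹) ξ v * h ξ := by
    simpa only [hg', neg_mul, mul_assoc] using hint.fun_neg
  have hgh' : Integrable fun ξ => gaussDensity d m A⁻¹ ξ * fderiv ℝ h ξ v := by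
    simpa using (hh.hasExpGrowth_fderiv.clm_apply (.const v)).integrable_gaussDensity_smul hA m
      (measurable_fderiv_apply_const ℝ h v).aestronglyMeasurable
  have hgh : Integrable fun ξ => gaussDensity d m A⁻¹ ξ * h ξ := by
    simpa using hh.hasExpGrowth.integrable_gaussDensity_smul hA m
      hh.differentiable.continuous.aestronglyMeasurable
  rw [integral_mul_fderiv_eq_neg_fderiv_mul_of_integrable hg'h hgh' hgh
    (fun ξ _ => (hasFDerivAt_gaussDensity hA m ξ).differentiableAt)
    (fun ξ _ => hh.differentiable ξ)]
  simp only [hg', neg_mul, integral_neg, neg_neg, mul_assoc]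

end Gaussian

lemma HasFDerivAt.mul_add_mul_log {E : Type*} [NormedAddCommGroup E] [NormedSpace ℝ E]
    {p : E → ℝ} {p' : E →L[ℝ] ℝ} {x : E} (hp : HasFDerivAt p p' x) (hx : p x ≠ 0) (c ω : ℝ) :
    HasFDerivAt (fun y => p y * (c + ω * Real.log (p y)))
      ((c + ω * Real.log (p x) + ω) • p') x := by
  refine (hp.mul (((hp.log hx).const_mul ω).const_add c)).congr_fderiv ?_
  ext v
  simp only [_root_.add_apply, _root_.smul_apply, smul_eq_mul]
  field_simp
  ring

section Mixture

variable {d : ℕ} {ι : Type*} [Fintype ι]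

noncomputable def gaussMixture (w : ι → ℝ) (μ : ι → Fin d → ℝ)
    (S : ι → Matrix (Fin d) (Fin d) ℝ) (ξ : Fin d → ℝ) : ℝ :=
  ∑ j, w j * gaussDensity d (μ j) (S j)⁻¹ ξ

variable {w : ι → ℝ} {μ : ι → Fin d → ℝ} {S : ι → Matrix (Fin d) (Fin d) ℝ}

lemma gaussMixture_pos [Nonempty ι] (hw : ∀ j, 0 < w j) (hS : ∀ j, (S j).PosDef)
    (ξ : Fin d → ℝ) : 0 < gaussMixture w μ S ξ :=
  Finset.sum_pos (fun j _ => mul_pos (hw j) (gaussDensity_pos (hS j).inv _ _))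
    Finset.univ_nonempty

lemma hasFDerivAt_gaussMixture (hS : ∀ j, (S j).PosDef) (ξ : Fin d → ℝ) :
    HasFDerivAt (gaussMixture w μ S)
      (∑ j, w j • -gaussDensity d (μ j) (S j)⁻¹ ξ • dotProductCLM (S j *ᵥ (ξ - μ j))) ξ :=
  HasFDerivAt.fun_sum fun j _ => (hasFDerivAt_gaussDensity (hS j) (μ j) ξ).const_mul (w j)

lemma hasFDerivAt_gaussMixture_update [DecidableEq ι] {k : ι} (hS : (S k).PosDef)
    (ξ : Fin d → ℝ) :
    HasFDerivAt (fun m => gaussMixture w (Function.update μ k m) S ξ)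
      ((w k * gaussDensity d (μ k) (S k)⁻¹ ξ) • dotProductCLM (S k *ᵥ (ξ - μ k))) (μ k) := by
  have h : ∀ m, gaussMixture w (Function.update μ k m) S ξ = w k * gaussDensity d m (S k)⁻¹ ξ +
      ∑ j ∈ Finset.univ.erase k, w j * gaussDensity d (μ j) (S j)⁻¹ ξ := fun m => by
    rw [gaussMixture, ← Finset.add_sum_erase _ _ (Finset.mem_univ k), Function.update_self]
    congr 1
    exact Finset.sum_congr rfl fun j hj => by
      rw [Function.update_of_ne (Finset.ne_of_mem_erase hj)]
  simp_rw [h, ← smul_smul]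
  exact ((hasFDerivAt_gaussDensity_mean hS (μ k) ξ).const_mul (w k)).add_const _

lemma hasExpGrowth_log_gaussMixture [Nonempty ι] (hw : ∀ j, 0 < w j) (hS : ∀ j, (S j).PosDef) :
    HasExpGrowth fun ξ => log (gaussMixture w μ S ξ) := by
  obtain ⟨k⟩ := ‹Nonempty ι›
  refine HasExpGrowth.log (p := fun ξ => w k * gaussDensity d (μ k) (S k)⁻¹ ξ)
    (HasExpGrowth.sum _ fun j _ => (HasExpGrowth.const (w j)).mul
      (hasExpGrowth_gaussDensity (hS j) (μ j)))
    (((HasExpGrowth.const (log (w k))).add (hasExpGrowth_log_gaussDensity (hS k) (μ k))).congr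
      fun ξ => (log_mul (hw k).ne' (gaussDensity_pos (hS k).inv _ _).ne').symm)
    (fun ξ => mul_pos (hw k) (gaussDensity_pos (hS k).inv _ _)) fun ξ => ?_
  exact Finset.single_le_sum (f := fun j => w j * gaussDensity d (μ j) (S j)⁻¹ ξ)
    (fun j _ => (mul_pos (hw j) (gaussDensity_pos (hS j).inv _ _)).le) (Finset.mem_univ k)

lemma hasExpGrowth_fderiv_log_gaussMixture [Nonempty ι] (hw : ∀ j, 0 < w j)
    (hS : ∀ j, (S j).PosDef) :
    HasExpGrowth (fderiv ℝ fun ξ => log (gaussMixture w μ S ξ)) := by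
  refine (HasExpGrowth.sum Finset.univ fun j _ =>
    (hasExpGrowth_dotProductCLM_mulVec_sub (S j) (μ j)).norm).of_isBigO
    (isBigO_of_le _ fun ξ => ?_)
  set L := fun j => dotProductCLM (S j *ᵥ (ξ - μ j))
  have hq := gaussMixture_pos (μ := μ) hw hS ξ
  -- `∇ log q` is a `w j N_j / q`-weighted average of the scores `L j`
  have hL : ‖∑ j, w j • -gaussDensity d (μ j) (S j)⁻¹ ξ • L j‖ ≤
      gaussMixture w μ S ξ * ∑ j, ‖L j‖ := by
    rw [gaussMixture, Finset.sum_mul]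
    refine (norm_sum_le _ _).trans (Finset.sum_le_sum fun j _ => ?_)
    have hg := gaussDensity_pos (hS j).inv (μ j) ξ
    rw [norm_smul, norm_smul, norm_neg, Real.norm_of_nonneg (hw j).le, Real.norm_of_nonneg hg.le,
      ← mul_assoc]
    exact mul_le_mul_of_nonneg_left
      (Finset.single_le_sum (fun k _ => norm_nonneg (L k)) (Finset.mem_univ j))
      (mul_pos (hw j) hg).le
  rw [((hasFDerivAt_gaussMixture hS ξ).log hq.ne').fderiv, norm_smul, norm_inv,
    Real.norm_of_nonneg hq.le, Real.norm_of_nonneg (Finset.sum_nonneg fun j _ => norm_nonneg _),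
    inv_mul_le_iff₀ hq]
  exact hL

lemma differentiableWithExpGrowth_log_gaussMixture [Nonempty ι] (hw : ∀ j, 0 < w j)
    (hS : ∀ j, (S j).PosDef) :
    DifferentiableWithExpGrowth fun ξ => log (gaussMixture w μ S ξ) where
  differentiable ξ :=
    ((hasFDerivAt_gaussMixture hS ξ).log (gaussMixture_pos hw hS ξ).ne').differentiableAt
  hasExpGrowth := hasExpGrowth_log_gaussMixture hw hS
  hasExpGrowth_fderiv := hasExpGrowth_fderiv_log_gaussMixture hw hS

theorem integral_fderiv_update_mul_add_mul_log [DecidableEq ι] [Nonempty ι] (hw : ∀ j, 0 < w j)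
    (hS : ∀ j, (S j).PosDef) (k : ι) {c : (Fin d → ℝ) → ℝ} {ω : ℝ}
    (hf : HasExpGrowth fun ξ => c ξ + ω * log (gaussMixture w μ S ξ))
    (hfc : Continuous fun ξ => c ξ + ω * log (gaussMixture w μ S ξ)) (v : Fin d → ℝ) :
    (∫ ξ, fderiv ℝ (fun m => gaussMixture w (Function.update μ k m) S ξ *
        (c ξ + ω * log (gaussMixture w (Function.update μ k m) S ξ))) (μ k)) v =
      w k * ∫ ξ, gaussDensity d (μ k) (S k)⁻¹ ξ *
        ((S k *ᵥ (ξ - μ k)) ⬝ᵥ v * (c ξ + ω * log (gaussMixture w μ S ξ) + ω)) := by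
  set f := fun ξ => c ξ + ω * log (gaussMixture w μ S ξ)
  have hderiv : ∀ ξ, fderiv ℝ (fun m => gaussMixture w (Function.update μ k m) S ξ *
      (c ξ + ω * log (gaussMixture w (Function.update μ k m) S ξ))) (μ k) =
      gaussDensity d (μ k) (S k)⁻¹ ξ • ((w k * (f ξ + ω)) • dotProductCLM (S k *ᵥ (ξ - μ k))) :=
    fun ξ => by
      rw [((hasFDerivAt_gaussMixture_update (hS k) ξ).mul_add_mul_log
        (gaussMixture_pos hw hS ξ).ne' (c ξ) ω).fderiv]
      simp only [Function.update_eq_self, smul_smul, f]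
      ring_nf
  have hint : Integrable fun ξ => gaussDensity d (μ k) (S k)⁻¹ ξ •
      ((w k * (f ξ + ω)) • dotProductCLM (S k *ᵥ (ξ - μ k))) :=
    (((HasExpGrowth.const (w k)).mul (hf.add (.const ω))).smul
      (hasExpGrowth_dotProductCLM_mulVec_sub _ _)).integrable_gaussDensity_smul (hS k) (μ k)
      ((continuous_const.mul (hfc.add continuous_const)).smul (by fun_prop)).aestronglyMeasurable
  rw [funext hderiv, ContinuousLinearMap.integral_apply hint, ← integral_const_mul]
  congr 1 with ξ
  simp only [_root_.smul_apply, smul_eq_mul, dotProductCLM_apply]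
  ring

end Mixture

theorem mixture_mean_gradient_general
    (d K : ℕ)
    (ℓ : (Fin d → ℝ) → ℝ) (hℓ : ContDiff ℝ 1 ℓ)
    (hgrowth : ∃ C > (0:ℝ), ∃ a > (0:ℝ), ∀ ξ,
      |ℓ ξ| + ‖fderiv ℝ ℓ ξ‖ ≤ C * Real.exp (a * ‖ξ‖))
    (ω : ℝ)
    (π' : Fin K → ℝ) (hπ : ∀ k, 0 < π' k)
    (μ : Fin K → Fin d → ℝ) (S : Fin K → Matrix (Fin d) (Fin d) ℝ)
    (hS : ∀ k, (S k).PosDef)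
    (k₀ : Fin K) :
    let mix : (Fin d → ℝ) → (Fin d → ℝ) → ℝ := fun m ξ =>
      ∑ j, π' j * gaussDensity d (Function.update μ k₀ m j) (S j)⁻¹ ξ
    let fω : (Fin d → ℝ) → ℝ := fun ξ => ℓ ξ + ω * Real.log (mix (μ k₀) ξ)
    ∀ _hswap : HasFDerivAt
        (fun m => ∫ ξ, mix m ξ * (ℓ ξ + ω * Real.log (mix m ξ)))
        (∫ ξ, fderiv ℝ (fun m => mix m ξ * (ℓ ξ + ω * Real.log (mix m ξ))) (μ k₀))
        (μ k₀),
      ∀ v : Fin d → ℝ,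
        (∫ ξ, fderiv ℝ (fun m => mix m ξ * (ℓ ξ + ω * Real.log (mix m ξ))) (μ k₀)) v
            = π' k₀ * ∫ ξ, gaussDensity d (μ k₀) (S k₀)⁻¹ ξ *
                ((((S k₀) *ᵥ (ξ - μ k₀)) ⬝ᵥ v) * fω ξ)
          ∧ (∫ ξ, fderiv ℝ (fun m => mix m ξ * (ℓ ξ + ω * Real.log (mix m ξ))) (μ k₀)) v
            = π' k₀ * ∫ ξ, gaussDensity d (μ k₀) (S k₀)⁻¹ ξ *
                fderiv ℝ (fun x => ℓ x + ω * Real.log (mix (μ k₀) x)) ξ v := by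
  intro mix fω _ v
  have : Nonempty (Fin K) := ⟨k₀⟩
  have hmix : mix (μ k₀) = gaussMixture π' μ S := by
    simp only [mix, Function.update_eq_self]
    rfl
  simp only [fω, hmix]
  obtain ⟨C, -, a, -, hCa⟩ := hgrowth
  have hf : DifferentiableWithExpGrowth fun ξ => ℓ ξ + ω * log (gaussMixture π' μ S ξ) :=
    (DifferentiableWithExpGrowth.of_abs_add_norm_fderiv_le (hℓ.differentiable one_ne_zero)
      hCa).add ((differentiableWithExpGrowth_log_gaussMixture hπ hS).const_mul ω)
  have hgrad := integral_fderiv_update_mul_add_mul_log hπ hS k₀ hf.hasExpGrowth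
    hf.differentiable.continuous v
  have hstein_f := integral_gaussDensity_mul_score_mul (hS k₀) (μ k₀) v hf
  have hstein_fω := integral_gaussDensity_mul_score_mul (hS k₀) (μ k₀) v (hf.add_const ω)
  simp only [fderiv_add_const] at hstein_fω
  exact ⟨hgrad.trans (by rw [hstein_fω, hstein_f]), hgrad.trans (by rw [hstein_fω])⟩

/-- Gradient of the annealed variational objective with respect to the mean `μ_{k₀}`
of one component of a Gaussian mixture: with `q_Λ` the mixture,
`f_ω(ξ; Λ) = ℓ(ξ) + ω log q_Λ(ξ)` and `L_ω` the objective, under validity of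
differentiation under the integral sign,
`∇_{μ_{k₀}} L_ω(Λ) = π_{k₀} ∫ N(ξ; μ_{k₀}, S_{k₀}⁻¹) S_{k₀}(ξ − μ_{k₀}) f_ω(ξ; Λ) dξ
                   = π_{k₀} ∫ N(ξ; μ_{k₀}, S_{k₀}⁻¹) ∇_ξ f_ω(ξ; Λ) dξ`,
where `f_ω(·; Λ)` is evaluated at the fixed current parameter value `Λ`. -/
theorem mixture_mean_gradient
    (d K : ℕ) (hK : 1 ≤ K)
    (ℓ : (Fin d → ℝ) → ℝ) (hℓ : ContDiff ℝ 1 ℓ)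
    (hgrowth : ∃ C > (0:ℝ), ∃ a > (0:ℝ), ∀ ξ,
      |ℓ ξ| + ‖fderiv ℝ ℓ ξ‖ ≤ C * Real.exp (a * ‖ξ‖))
    (ω : ℝ) (hω : 0 < ω)
    (π' : Fin K → ℝ) (hπ : ∀ k, 0 < π' k) (hsum : ∑ k, π' k = 1)
    (μ : Fin K → Fin d → ℝ) (S : Fin K → Matrix (Fin d) (Fin d) ℝ)
    (hS : ∀ k, (S k).PosDef)
    (k₀ : Fin K) :
    let mix : (Fin d → ℝ) → (Fin d → ℝ) → ℝ := fun m ξ =>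
      ∑ j, π' j * gaussDensity d (Function.update μ k₀ m j) (S j)⁻¹ ξ
    let fω : (Fin d → ℝ) → ℝ := fun ξ => ℓ ξ + ω * Real.log (mix (μ k₀) ξ)
    ∀ _hswap : HasFDerivAt
        (fun m => ∫ ξ, mix m ξ * (ℓ ξ + ω * Real.log (mix m ξ)))
        (∫ ξ, fderiv ℝ (fun m => mix m ξ * (ℓ ξ + ω * Real.log (mix m ξ))) (μ k₀))
        (μ k₀),
      ∀ v : Fin d → ℝ,
        (∫ ξ, fderiv ℝ (fun m => mix m ξ * (ℓ ξ + ω * Real.log (mix m ξ))) (μ k₀)) v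
            = π' k₀ * ∫ ξ, gaussDensity d (μ k₀) (S k₀)⁻¹ ξ *
                ((((S k₀) *ᵥ (ξ - μ k₀)) ⬝ᵥ v) * fω ξ)
          ∧ (∫ ξ, fderiv ℝ (fun m => mix m ξ * (ℓ ξ + ω * Real.log (mix m ξ))) (μ k₀)) v
            = π' k₀ * ∫ ξ, gaussDensity d (μ k₀) (S k₀)⁻¹ ξ *
                fderiv ℝ (fun x => ℓ x + ω * Real.log (mix (μ k₀) x)) ξ v :=
  mixture_mean_gradient_general d K ℓ hℓ hgrowth ω π' hπ μ S hS k₀
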